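/- arXiv:1811.06189 — 2 statements merged into one kernel-verified Lean document; each statement's English description precedes it below -/
import Mathlib

section
/- If Γ is a move semigroup, then arblim(Γ), the smallest superset of Γ satisfying axiom (arblim), is also a move semigroup. -/
open Filter Set

noncomputable section

/-- The unrestricted translation (`b = false`) or reflection (`b = true`)
with parameter `p`: `x ↦ x + p`, resp. `x ↦ p - x`. -/
def uEval (b : Bool) (p : ℝ) (x : ℝ) : ℝ := if b then p - x else x + p

/-- A restricted move `γ|_D`: a translation (`isRefl = false`) or a
reflection (`isRefl = true`) together with a domain. -/
structure Move where
  isRefl : Bool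
  param : ℝ
  dom : Set ℝ

namespace Move

def eval (m : Move) : ℝ → ℝ := uEval m.isRefl m.param

/-- The character: `+1` for translations, `-1` for reflections. -/
def chi (m : Move) : ℝ := if m.isRefl then -1 else 1

def image (m : Move) : Set ℝ := m.eval '' m.dom

def graph (m : Move) : Set (ℝ × ℝ) := (fun x => (x, m.eval x)) '' m.dom

/-- Domains of moves must be open intervals or empty. -/
def ValidDom (D : Set ℝ) : Prop := IsOpen D ∧ D.OrdConnected

/-- A valid move: open-interval-or-empty domain; moves with empty domain are
normalized (`param = 0`), so that there are exactly two empty moves, one of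
each character. -/
def Valid (m : Move) : Prop := ValidDom m.dom ∧ (m.dom = ∅ → m.param = 0)

/-- The move `γ|_D` (normalized representative). -/
def mk' (b : Bool) (p : ℝ) (D : Set ℝ) : Move :=
  letI : Decidable (D = ∅) := Classical.dec _
  ⟨b, if D = ∅ then 0 else p, D⟩

/-- Composition of moves: `γ₂|_{D₂} ∘ γ₁|_{D₁} = (γ₂ ∘ γ₁)|_{D₁ ∩ γ₁⁻¹ D₂}`. -/
def comp (m2 m1 : Move) : Move :=
  mk' (m2.isRefl != m1.isRefl)
    (if m2.isRefl then m2.param - m1.param else m1.param + m2.param)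
    (m1.dom ∩ m1.eval ⁻¹' m2.dom)

/-- Inverse of a move: `(γ|_D)⁻¹ = γ⁻¹|_{γ(D)}`. -/
def inv (m : Move) : Move :=
  mk' m.isRefl (if m.isRefl then m.param else -m.param) (m.eval '' m.dom)

/-- The restriction partial order: `m1` is a restriction of `m2`. -/
def le (m1 m2 : Move) : Prop :=
  m1.isRefl = m2.isRefl ∧ m1.dom ⊆ m2.dom ∧ ∀ x ∈ m1.dom, m1.eval x = m2.eval x

end Move

/-- A move ensemble: a set of (valid) moves. -/
def IsMoveEnsemble (Ω : Set Move) : Prop := ∀ m ∈ Ω, m.Valid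

/-- A move semigroup: a move ensemble closed under composition and inverse. -/
def IsMoveSemigroup (Γ : Set Move) : Prop :=
  IsMoveEnsemble Γ ∧ (∀ m1 ∈ Γ, ∀ m2 ∈ Γ, Move.comp m2 m1 ∈ Γ) ∧
    (∀ m ∈ Γ, Move.inv m ∈ Γ)

/-- `⟨Ω⟩`: the smallest move semigroup containing `Ω`. -/
def semi (Ω : Set Move) : Set Move := ⋂₀ {Γ | IsMoveSemigroup Γ ∧ Ω ⊆ Γ}

/-- Axiom (restrict). -/
def RestrictClosed (Ω : Set Move) : Prop :=
  ∀ m ∈ Ω, ∀ D' : Set ℝ, D' ⊆ m.dom → Move.ValidDom D' →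
    Move.mk' m.isRefl m.param D' ∈ Ω

/-- The restriction closure of an ensemble. -/
def restrictCl (Ω : Set Move) : Set Move := ⋂₀ {Γ | RestrictClosed Γ ∧ Ω ⊆ Γ}

/-- Join-closed: restriction-closed and closed under continuation (joins). -/
def JoinClosed (Ω : Set Move) : Prop :=
  RestrictClosed Ω ∧
    ∀ (b : Bool) (p : ℝ) (J : Set (Set ℝ)), J.Nonempty →
      (∀ I ∈ J, Move.mk' b p I ∈ Ω) → (⋃₀ J).OrdConnected →
      Move.mk' b p (⋃₀ J) ∈ Ω

/-- `join(Ω)`: the smallest join-closed ensemble containing `Ω`. -/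
def joinCl (Ω : Set Move) : Set Move := ⋂₀ {Γ | JoinClosed Γ ∧ Ω ⊆ Γ}

/-- `joinsemi(Ω) = join(⟨Ω⟩)`: the joined move semigroup generated by `Ω`. -/
def joinsemi (Ω : Set Move) : Set Move := joinCl (semi Ω)

/-- `θ` respects the move `γ|_D`: `θ(γ(x)) = χ(γ)·θ(x) + c` on `D`. -/
def Respects (θ : ℝ → ℝ) (m : Move) : Prop :=
  ∃ c : ℝ, ∀ x ∈ m.dom, θ (m.eval x) = m.chi * θ x + c

/-- `θ` respects each move of the ensemble `Ω`. -/
def RespectsAll (θ : ℝ → ℝ) (Ω : Set Move) : Prop := ∀ m ∈ Ω, Respects θ m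

/-- All translation moves with graph contained in `O`. -/
def tMoves (O : Set (ℝ × ℝ)) : Set Move :=
  {m | m.isRefl = false ∧ m.Valid ∧ m.graph ⊆ O}

/-- All reflection moves with graph contained in `O`. -/
def rMoves (O : Set (ℝ × ℝ)) : Set Move :=
  {m | m.isRefl = true ∧ m.Valid ∧ m.graph ⊆ O}

/-- All moves with graph contained in `O`. -/
def movesIn (O : Set (ℝ × ℝ)) : Set Move := {m | m.Valid ∧ m.graph ⊆ O}

/-- Translation moves graph of an ensemble. -/
def grPlus (Ω : Set Move) : Set (ℝ × ℝ) :=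
  {q | ∃ m ∈ Ω, m.isRefl = false ∧ q ∈ m.graph}

/-- Reflection moves graph of an ensemble. -/
def grMinus (Ω : Set Move) : Set (ℝ × ℝ) :=
  {q | ∃ m ∈ Ω, m.isRefl = true ∧ q ∈ m.graph}

/-- `dom(O)`: union of the domains of the moves in `movesIn O`. -/
def domOf (O : Set (ℝ × ℝ)) : Set ℝ := {x | ∃ m ∈ movesIn O, x ∈ m.dom}

/-- `im(O)`: union of the images of the moves in `movesIn O`. -/
def imOf (O : Set (ℝ × ℝ)) : Set ℝ := {x | ∃ m ∈ movesIn O, x ∈ m.image}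

/-- domain of a move ensemble. -/
def domEns (Ω : Set Move) : Set ℝ := {x | ∃ m ∈ Ω, x ∈ m.dom}

/-- image of a move ensemble. -/
def imEns (Ω : Set Move) : Set ℝ := {x | ∃ m ∈ Ω, x ∈ m.image}

/-- Convergence of a sequence of unrestricted moves (character, parameter):
all but finitely many have character `b`, and the parameters tend to `p`. -/
def ConvergesTo (γ : ℕ → Bool × ℝ) (b : Bool) (p : ℝ) : Prop :=
  (∀ᶠ i in atTop, (γ i).1 = b) ∧ Tendsto (fun i => (γ i).2) atTop (nhds p)

/-- Axiom (lim): fixed-domain limits of moves. -/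
def LimClosed (Ω : Set Move) : Prop :=
  ∀ D : Set ℝ, Move.ValidDom D →
    ∀ (γ : ℕ → Bool × ℝ) (b : Bool) (p : ℝ), ConvergesTo γ b p →
      (∀ i, Move.mk' (γ i).1 (γ i).2 D ∈ Ω) → Move.mk' b p D ∈ Ω

/-- `lim(Ω)`: the smallest superset of `Ω` satisfying (lim). -/
def limCl (Ω : Set Move) : Set Move := ⋂₀ {Γ | LimClosed Γ ∧ Ω ⊆ Γ}

/-- Axiom (arblim): limits of moves with converging domains. -/
def ArbLimClosed (Ω : Set Move) : Prop :=
  ∀ (γ : ℕ → Bool × ℝ) (b : Bool) (p : ℝ) (l u : ℕ → ℝ) (l₀ u₀ : ℝ),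
    ConvergesTo γ b p → Tendsto l atTop (nhds l₀) → Tendsto u atTop (nhds u₀) →
    (∀ i, Move.mk' (γ i).1 (γ i).2 (Set.Ioo (l i) (u i)) ∈ Ω) →
    Move.mk' b p (Set.Ioo l₀ u₀) ∈ Ω

/-- `arblim(Ω)`: the smallest superset of `Ω` satisfying (arblim). -/
def arblimCl (Ω : Set Move) : Set Move := ⋂₀ {Γ | ArbLimClosed Γ ∧ Ω ⊆ Γ}

/-- Axiom (kaleido). -/
def Kaleidoscopic (Ω : Set Move) : Prop :=
  ∀ D I : Set ℝ, Move.ValidDom D → Move.ValidDom I →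
    (tMoves (D ×ˢ I) ⊆ Ω ↔ rMoves (D ×ˢ I) ⊆ Ω)

/-- Axiom (extend_A): continuous domain extension relative to the open set `A`. -/
def ExtendClosed (A : Set ℝ) (Ω : Set Move) : Prop :=
  ∀ (b : Bool) (p : ℝ) (J : Set (Set ℝ)) (D : Set ℝ), J.Nonempty →
    (∀ I ∈ J, Move.mk' b p I ∈ Ω) → Move.ValidDom D →
    D ⊆ closure (⋃₀ J) ∩ A ∩ uEval b p ⁻¹' A →
    Move.mk' b p D ∈ Ω

/-- `joinextend_A(Ω)`: the smallest superset of `Ω` satisfying (extend_A). -/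
def joinExtendCl (A : Set ℝ) (Ω : Set Move) : Set Move :=
  ⋂₀ {Γ | ExtendClosed A Γ ∧ Ω ⊆ Γ}

/-- A closed move semigroup with respect to the open set `A`. -/
def ClosedMoveSemigroup (A : Set ℝ) (Γ : Set Move) : Prop :=
  IsMoveSemigroup Γ ∧ JoinClosed Γ ∧ Kaleidoscopic Γ ∧ LimClosed Γ ∧
    ExtendClosed A Γ

/-- The moves closure `ctscl(Ω)`: the smallest closed move semigroup
(with respect to `A`) containing `Ω`. -/
def ctscl (A : Set ℝ) (Ω : Set Move) : Set Move :=
  ⋂₀ {Γ | ClosedMoveSemigroup A Γ ∧ Ω ⊆ Γ}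

/-- The set of maximal elements of `Ω` in the restriction partial order. -/
def MaxOf (Ω : Set Move) : Set Move :=
  {m ∈ Ω | ∀ m' ∈ Ω, Move.le m m' → Move.le m' m}

/-! (arblim) closes a set under limits of interval moves `γ|_(l,u)` whose character is
eventually constant and whose parameter and endpoints converge. Inversion, and composition
on either side with a fixed move, send an interval move to an interval move whose parameter and
endpoints depend continuously on the old ones: translating or reflecting an interval moves its
endpoints affinely, and intersecting with a fixed open interval clamps them continuously. Hence
the preimage of an (arblim)-closed set under each of these operations is (arblim)-closed, and
minimality of `arblim(Γ)` carries closure from `Γ` to `arblim(Γ)`: first for composition with a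
fixed move of `Γ`, then with a fixed move of `arblim(Γ)`. -/

open Topology

@[simp] theorem uEval_false (p : ℝ) : uEval false p = fun x => x + p := by
  funext x; simp [uEval]

@[simp] theorem uEval_true (p : ℝ) : uEval true p = fun x => p - x := by
  funext x; simp [uEval]

theorem uEval_injective (b : Bool) (p : ℝ) : Function.Injective (uEval b p) := by
  cases b
  · simpa using add_left_injective p
  · simpa using sub_right_injective

theorem Move.ValidDom.mem_iff {D : Set ℝ} (hD : Move.ValidDom D) (hne : D.Nonempty) {x : ℝ} :
    x ∈ D ↔ (BddBelow D → sInf D < x) ∧ (BddAbove D → x < sSup D) := by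
  constructor
  · intro hx
    obtain ⟨y, hyx, hy⟩ := Filter.Eventually.exists_lt (hD.1.mem_nhds hx)
    obtain ⟨z, hxz, hz⟩ := Filter.Eventually.exists_gt (hD.1.mem_nhds hx)
    exact ⟨fun h => (csInf_le h hy).trans_lt hyx, fun h => hxz.trans_le (le_csSup h hz)⟩
  · rintro ⟨hlo, hhi⟩
    obtain ⟨y, hy, hyx⟩ : ∃ y ∈ D, y < x := by
      by_cases h : BddBelow D
      · exact exists_lt_of_csInf_lt hne (hlo h)
      · exact not_bddBelow_iff.1 h x
    obtain ⟨z, hz, hxz⟩ : ∃ z ∈ D, x < z := by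
      by_cases h : BddAbove D
      · exact exists_lt_of_lt_csSup hne (hhi h)
      · exact not_bddAbove_iff.1 h x
    exact hD.2.out hy hz ⟨hyx.le, hxz.le⟩

theorem Move.ValidDom.exists_inter_Ioo {D : Set ℝ} (hD : Move.ValidDom D) :
    ∃ f g : ℝ → ℝ, Continuous f ∧ Continuous g ∧ ∀ α β, D ∩ Ioo α β = Ioo (f α) (g β) := by
  rcases D.eq_empty_or_nonempty with rfl | hne
  · exact ⟨0, 0, continuous_const, continuous_const, by simp⟩
  classical
  refine ⟨fun α => if BddBelow D then max α (sInf D) else α,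
    fun β => if BddAbove D then min β (sSup D) else β,
    continuous_if_const _ (fun _ => by fun_prop) (fun _ => by fun_prop),
    continuous_if_const _ (fun _ => by fun_prop) (fun _ => by fun_prop), fun α β => ?_⟩
  ext x
  simp only [mem_inter_iff, hD.mem_iff hne, mem_Ioo]
  split_ifs <;> simp only [max_lt_iff, lt_min_iff, true_implies, false_implies, *] <;> tauto

def ContinuousIooFamily {X : Type*} [TopologicalSpace X] (S : X → Set ℝ) : Prop :=
  ∃ L U : X → ℝ, Continuous L ∧ Continuous U ∧ ∀ x, S x = Ioo (L x) (U x)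

namespace ContinuousIooFamily

variable {X : Type*} [TopologicalSpace X] {S : X → Set ℝ}

theorem Ioo {L U : X → ℝ} (hL : Continuous L) (hU : Continuous U) :
    ContinuousIooFamily fun x => Set.Ioo (L x) (U x) :=
  ⟨L, U, hL, hU, fun _ => rfl⟩

theorem validDom_inter (hS : ContinuousIooFamily S) {D : Set ℝ} (hD : Move.ValidDom D) :
    ContinuousIooFamily fun x => D ∩ S x := by
  obtain ⟨L, U, hL, hU, hS⟩ := hS
  obtain ⟨f, g, hf, hg, hfg⟩ := hD.exists_inter_Ioo
  exact ⟨f ∘ L, g ∘ U, hf.comp hL, hg.comp hU, fun x => by simp [hS, hfg]⟩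

theorem image_uEval (hS : ContinuousIooFamily S) (b : Bool) {q : X → ℝ} (hq : Continuous q) :
    ContinuousIooFamily fun x => uEval b (q x) '' S x := by
  obtain ⟨L, U, hL, hU, hS⟩ := hS
  cases b
  · refine ⟨L + q, U + q, hL.add hq, hU.add hq, fun x => ?_⟩
    simp [hS]
  · refine ⟨q - U, q - L, hq.sub hU, hq.sub hL, fun x => ?_⟩
    simp [hS, image_const_sub_Ioo]

theorem preimage_uEval (hS : ContinuousIooFamily S) (b : Bool) {q : X → ℝ} (hq : Continuous q) :
    ContinuousIooFamily fun x => uEval b (q x) ⁻¹' S x := by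
  obtain ⟨L, U, hL, hU, hS⟩ := hS
  cases b
  · refine ⟨L - q, U - q, hL.sub hq, hU.sub hq, fun x => ?_⟩
    simp [hS, preimage_add_const_Ioo]
  · refine ⟨q - U, q - L, hq.sub hU, hq.sub hL, fun x => ?_⟩
    simp [hS, preimage_const_sub_Ioo]

end ContinuousIooFamily

namespace Move

variable {b : Bool} {p : ℝ} {D : Set ℝ}

theorem mk'_congr_param {p' : ℝ} (h : D.Nonempty → p = p') : mk' b p D = mk' b p' D := by
  rcases D.eq_empty_or_nonempty with rfl | hD
  · simp [mk']
  · rw [h hD]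

theorem valid_mk' (hD : ValidDom D) : (mk' b p D).Valid :=
  ⟨hD, fun h => by simp [mk', show D = ∅ from h]⟩

theorem eval_mk' (hD : D.Nonempty) : (mk' b p D).eval = uEval b p := by
  simp [eval, mk', hD.ne_empty]

theorem inv_mk' : (mk' b p D).inv = mk' b (if b then p else -p) (uEval b p '' D) := by
  rcases D.eq_empty_or_nonempty with rfl | hD
  · simp [inv, mk']
  · rw [inv, eval_mk' hD]
    simp [mk', hD.ne_empty]

theorem comp_mk'_left (m : Move) :
    comp (mk' b p D) m =
      mk' (b != m.isRefl) (if b then p - m.param else m.param + p) (m.dom ∩ m.eval ⁻¹' D) := by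
  refine mk'_congr_param fun ⟨x, hx⟩ => ?_
  simp [mk', (show D.Nonempty from ⟨_, hx.2⟩).ne_empty]

theorem comp_mk'_right (m : Move) :
    comp m (mk' b p D) =
      mk' (m.isRefl != b) (if m.isRefl then m.param - p else p + m.param)
        (D ∩ uEval b p ⁻¹' m.dom) := by
  rcases D.eq_empty_or_nonempty with rfl | hD
  · simp [comp, mk']
  · rw [comp, eval_mk' hD]
    simp [mk', hD.ne_empty]

end Move

/-- `(p, l, u)` stands for the move with parameter `p` on `(l, u)`. -/
def ContinuousOnIntervalMoves (Φ : Move → Move) : Prop :=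
  ∀ b, ∃ (c : Bool) (P : ℝ × ℝ × ℝ → ℝ) (S : ℝ × ℝ × ℝ → Set ℝ),
    Continuous P ∧ ContinuousIooFamily S ∧
      ∀ p l u, Φ (Move.mk' b p (Ioo l u)) = Move.mk' c (P (p, l, u)) (S (p, l, u))

theorem ArbLimClosed.preimage {Ω : Set Move} (hΩ : ArbLimClosed Ω) {Φ : Move → Move}
    (hΦ : ContinuousOnIntervalMoves Φ) : ArbLimClosed (Φ ⁻¹' Ω) := by
  choose c P S hP hS hΦ using hΦ
  choose L U hL hU hLU using hS
  intro γ b p l u l₀ u₀ hγ hl hu hmem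
  have hx : Tendsto (fun i => ((γ i).2, l i, u i)) atTop (𝓝 (p, l₀, u₀)) :=
    hγ.2.prodMk_nhds (hl.prodMk_nhds hu)
  have hlim : ∀ F : Bool → ℝ × ℝ × ℝ → ℝ, (∀ b, Continuous (F b)) →
      Tendsto (fun i => F (γ i).1 ((γ i).2, l i, u i)) atTop (𝓝 (F b (p, l₀, u₀))) :=
    fun F hF => ((hF b).tendsto _ |>.comp hx).congr'
      (hγ.1.mono fun i hi => by simp only [Function.comp_apply, hi])
  have hmem' := fun i => by simpa only [mem_preimage, hΦ, hLU] using hmem i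
  rw [mem_preimage, hΦ, hLU]
  exact hΩ (fun i => (c (γ i).1, P (γ i).1 ((γ i).2, l i, u i))) (c b) _ _ _ _ _
    ⟨hγ.1.mono fun i hi => by simp [hi], hlim P hP⟩ (hlim L hL) (hlim U hU) hmem'

theorem continuousOnIntervalMoves_inv : ContinuousOnIntervalMoves Move.inv := fun b =>
  ⟨b, fun x => if b then x.1 else -x.1, fun x => uEval b x.1 '' Ioo x.2.1 x.2.2,
    continuous_if_const _ (fun _ => by fun_prop) (fun _ => by fun_prop),
    (ContinuousIooFamily.Ioo (by fun_prop) (by fun_prop)).image_uEval b (by fun_prop),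
    fun _ _ _ => Move.inv_mk'⟩

theorem continuousOnIntervalMoves_comp_left {m : Move} (hm : Move.ValidDom m.dom) :
    ContinuousOnIntervalMoves (Move.comp · m) := fun b =>
  ⟨b != m.isRefl, fun x => if b then x.1 - m.param else m.param + x.1,
    fun x => m.dom ∩ m.eval ⁻¹' Ioo x.2.1 x.2.2,
    continuous_if_const _ (fun _ => by fun_prop) (fun _ => by fun_prop),
    ((ContinuousIooFamily.Ioo (by fun_prop) (by fun_prop)).preimage_uEval m.isRefl
      continuous_const).validDom_inter hm,
    fun _ _ _ => Move.comp_mk'_left m⟩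

theorem continuousOnIntervalMoves_comp_right {m : Move} (hm : Move.ValidDom m.dom) :
    ContinuousOnIntervalMoves (Move.comp m) := fun b => by
  refine ⟨m.isRefl != b, fun x => if m.isRefl then m.param - x.1 else x.1 + m.param,
    fun x => Ioo x.2.1 x.2.2 ∩ uEval b x.1 ⁻¹' m.dom,
    continuous_if_const _ (fun _ => by fun_prop) (fun _ => by fun_prop), ?_,
    fun _ _ _ => Move.comp_mk'_right m⟩
  have hpull : ∀ x : ℝ × ℝ × ℝ, Ioo x.2.1 x.2.2 ∩ uEval b x.1 ⁻¹' m.dom =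
      uEval b x.1 ⁻¹' (m.dom ∩ uEval b x.1 '' Ioo x.2.1 x.2.2) := fun x => by
    rw [preimage_inter, (uEval_injective b x.1).preimage_image, inter_comm]
  simp only [hpull]
  exact (((ContinuousIooFamily.Ioo (by fun_prop) (by fun_prop)).image_uEval b
    (by fun_prop)).validDom_inter hm).preimage_uEval b (by fun_prop)

theorem subset_arblimCl (Ω : Set Move) : Ω ⊆ arblimCl Ω :=
  subset_sInter fun _ h => h.2

theorem arblimCl_subset {Ω Ω' : Set Move} (h : ArbLimClosed Ω') (hsub : Ω ⊆ Ω') :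
    arblimCl Ω ⊆ Ω' :=
  sInter_subset_of_mem ⟨h, hsub⟩

theorem arbLimClosed_arblimCl (Ω : Set Move) : ArbLimClosed (arblimCl Ω) :=
  fun γ b p l u l₀ u₀ hγ hl hu hmem => mem_sInter.2 fun _ h =>
    h.1 γ b p l u l₀ u₀ hγ hl hu fun i => mem_sInter.1 (hmem i) _ h

theorem IsMoveEnsemble.arblimCl {Ω : Set Move} (hΩ : IsMoveEnsemble Ω) :
    IsMoveEnsemble (arblimCl Ω) :=
  arblimCl_subset (Ω' := {m | m.Valid})
    (fun _ _ _ _ _ _ _ _ _ _ _ => Move.valid_mk' ⟨isOpen_Ioo, ordConnected_Ioo⟩) hΩ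

theorem mapsTo_arblimCl {Φ : Move → Move} (hΦ : ContinuousOnIntervalMoves Φ) {Ω Ω' : Set Move}
    (h : MapsTo Φ Ω (arblimCl Ω')) : MapsTo Φ (arblimCl Ω) (arblimCl Ω') :=
  arblimCl_subset ((arbLimClosed_arblimCl Ω').preimage hΦ) h

/-- The (arblim)-closure of a move semigroup is a move semigroup. -/
theorem arblimCl_isMoveSemigroup (Γ : Set Move) (hΓ : IsMoveSemigroup Γ) :
    IsMoveSemigroup (arblimCl Γ) := by
  obtain ⟨hvalid, hcomp, hinv⟩ := hΓ
  have hvalid' := hvalid.arblimCl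
  have hcomp_left : ∀ m ∈ Γ, MapsTo (Move.comp · m) (arblimCl Γ) (arblimCl Γ) :=
    fun m hm => mapsTo_arblimCl (continuousOnIntervalMoves_comp_left (hvalid m hm).1)
      fun m' hm' => subset_arblimCl Γ (hcomp m hm m' hm')
  refine ⟨hvalid', fun m₁ hm₁ m₂ hm₂ => ?_, fun m hm => ?_⟩
  · exact mapsTo_arblimCl (continuousOnIntervalMoves_comp_right (hvalid' m₂ hm₂).1)
      (fun m hm => hcomp_left m hm hm₂) hm₁
  · exact mapsTo_arblimCl continuousOnIntervalMoves_inv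
      (fun m hm => subset_arblimCl Γ (hinv m hm)) hm
end
end

section
/- Limits imply components: Let Γ^∨ be a join-closed move semigroup. Suppose γ|_D is the limit (with respect to fixed domain D, i.e., γ^i → γ and γ^i|_D ∈ Γ^∨) of a sequence of moves γ^i|_{D^i} in Γ^∨ with γ^i ≠ γ for every i, and let I = γ(D). Then: (1) if γ is a translation, tMoves((D ∪ I) × (D ∪ I)) ⊆ join(lim(Γ^∨)); (2) if γ is a reflection, rMoves((D × I) ∪ (I × D)) ⊆ join(lim(Γ^∨)) and tMoves((D × D) ∪ (I × I)) ⊆ join(lim(Γ^∨)). -/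
open Filter Set

noncomputable section

/-!
Write `γ_i = (b, t i)` with `t i → p`, `t i ≠ p`. The moves `γ_i⁻¹ ∘ γ_j` restricted to `D` are
translations by `±(t j - t i)`, nonzero and arbitrarily small. Iterating a small translation
`k` times inside `D` (the intermediate points stay in the interval `D`) reaches a translation
within `ε` of any `σ` and no further than `σ`, so every translation `τ_σ` on `D ∩ (D - σ)` is a
fixed-domain limit of moves of `Γ`. Sandwiching these translations between `γ_i` and `γ_i⁻¹`
and passing to the limit produces every move of the components, but near points of `I` the
domains of the `γ_i⁻¹` move with `i`; so one only gets limits on small neighbourhoods, and the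
join axiom glues them back together.
-/

open Filter Set Topology

/-- Parameter of the composite `uEval b₂ q₂ ∘ uEval b₁ q₁`, as in `Move.comp`. -/
def compParam : Bool → ℝ → ℝ → ℝ
  | true, q₂, q₁ => q₂ - q₁
  | false, q₂, q₁ => q₁ + q₂

/-- Parameter of the inverse of `uEval b q`, as in `Move.inv`. -/
def invParam : Bool → ℝ → ℝ
  | true, q => q
  | false, q => -q

lemma uEval_invParam_uEval (b : Bool) (q x : ℝ) : uEval b (invParam b q) (uEval b q x) = x := by
  cases b <;> simp [uEval, invParam]

lemma uEval_uEval_invParam (b : Bool) (q x : ℝ) : uEval b q (uEval b (invParam b q) x) = x := by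
  cases b <;> simp [uEval, invParam]

lemma dist_uEval_le (b : Bool) (q Q z x : ℝ) :
    dist (uEval b q z) (uEval b Q x) ≤ dist q Q + dist z x := by
  simp only [Real.dist_eq]
  cases b
  · calc |uEval false q z - uEval false Q x| = |(q - Q) + (z - x)| := by simp [uEval]; ring_nf
      _ ≤ |q - Q| + |z - x| := abs_add_le _ _
  · calc |uEval true q z - uEval true Q x| = |(q - Q) - (z - x)| := by simp [uEval]; ring_nf
      _ ≤ |q - Q| + |z - x| := abs_sub _ _

lemma Filter.Tendsto.compParam (b : Bool) {q₂ q₁ : ℕ → ℝ} {Q₂ Q₁ : ℝ}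
    (h₂ : Tendsto q₂ atTop (𝓝 Q₂)) (h₁ : Tendsto q₁ atTop (𝓝 Q₁)) :
    Tendsto (fun n => compParam b (q₂ n) (q₁ n)) atTop (𝓝 (compParam b Q₂ Q₁)) := by
  cases b
  · exact h₁.add h₂
  · exact h₂.sub h₁

lemma Filter.Tendsto.invParam (b : Bool) {q : ℕ → ℝ} {Q : ℝ} (h : Tendsto q atTop (𝓝 Q)) :
    Tendsto (fun n => invParam b (q n)) atTop (𝓝 (invParam b Q)) := by
  cases b
  · exact h.neg
  · exact h

namespace Move

lemma validDom_empty : ValidDom (∅ : Set ℝ) := ⟨isOpen_empty, ordConnected_empty⟩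

lemma ValidDom.inter {A B : Set ℝ} (hA : ValidDom A) (hB : ValidDom B) : ValidDom (A ∩ B) :=
  ⟨hA.1.inter hB.1, hA.2.inter hB.2⟩

lemma validDom_ball (x η : ℝ) : ValidDom (Metric.ball x η) := by
  rw [Real.ball_eq_Ioo]; exact ⟨isOpen_Ioo, ordConnected_Ioo⟩

@[simp] lemma mk'_isRefl (b : Bool) (q : ℝ) (E : Set ℝ) : (mk' b q E).isRefl = b := rfl

@[simp] lemma mk'_dom (b : Bool) (q : ℝ) (E : Set ℝ) : (mk' b q E).dom = E := rfl

lemma mk'_param_of_nonempty {b : Bool} {q : ℝ} {E : Set ℝ} (hE : E.Nonempty) :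
    (mk' b q E).param = q := by
  simp [mk', hE.ne_empty]

lemma mk'_congr {b : Bool} {q q' : ℝ} {E : Set ℝ} (h : E.Nonempty → q = q') :
    mk' b q E = mk' b q' E := by
  rcases E.eq_empty_or_nonempty with rfl | hE
  · simp [mk']
  · rw [h hE]

lemma mk'_empty (b : Bool) (q : ℝ) : mk' b q ∅ = mk' b 0 ∅ := mk'_congr fun h => absurd h (by simp)

lemma Valid.mk'_eq {m : Move} (h : m.Valid) : mk' m.isRefl m.param m.dom = m := by
  rcases m.dom.eq_empty_or_nonempty with hE | hE
  · obtain ⟨b, q, E⟩ := m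
    simp only at hE
    have hq : q = 0 := h.2 hE
    simp [mk', hE, hq]
  · rw [mk']; simp [hE.ne_empty]

lemma eval_mk'_of_mem {b : Bool} {q : ℝ} {E : Set ℝ} {x : ℝ} (hx : x ∈ E) :
    (mk' b q E).eval x = uEval b q x := by
  rw [eval, mk'_isRefl, mk'_param_of_nonempty ⟨x, hx⟩]

lemma comp_mk' (b₂ b₁ : Bool) (q₂ q₁ : ℝ) (E₂ E₁ : Set ℝ) :
    comp (mk' b₂ q₂ E₂) (mk' b₁ q₁ E₁)
      = mk' (b₂ != b₁) (compParam b₂ q₂ q₁) (E₁ ∩ uEval b₁ q₁ ⁻¹' E₂) := by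
  have hdom : E₁ ∩ (mk' b₁ q₁ E₁).eval ⁻¹' E₂ = E₁ ∩ uEval b₁ q₁ ⁻¹' E₂ := by
    ext x
    constructor <;> rintro ⟨hx₁, hx₂⟩ <;> exact ⟨hx₁, by simpa [eval_mk'_of_mem hx₁] using hx₂⟩
  rw [comp, mk'_dom, mk'_dom, hdom]
  refine mk'_congr fun ⟨x, hx₁, hx₂⟩ => ?_
  rw [mk'_isRefl, mk'_param_of_nonempty ⟨x, hx₁⟩, mk'_param_of_nonempty (E := E₂) ⟨_, hx₂⟩]
  cases b₂ <;> rfl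

lemma inv_mk'_s12 (b : Bool) (q : ℝ) (E : Set ℝ) :
    inv (mk' b q E) = mk' b (invParam b q) (uEval b q '' E) := by
  have himage : (mk' b q E).eval '' E = uEval b q '' E :=
    image_congr fun x hx => eval_mk'_of_mem hx
  rw [inv, mk'_isRefl, mk'_dom, himage]
  refine mk'_congr fun ⟨_, x, hx, _⟩ => ?_
  rw [mk'_param_of_nonempty ⟨x, hx⟩]
  cases b <;> rfl

end Move

lemma RestrictClosed.mk'_mem {Ω : Set Move} (hΩ : RestrictClosed Ω) {b : Bool} {q : ℝ}
    {E E' : Set ℝ} (h : Move.mk' b q E ∈ Ω) (hE' : Move.ValidDom E') (hsub : E' ⊆ E) :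
    Move.mk' b q E' ∈ Ω := by
  rw [Move.mk'_congr fun hne => (Move.mk'_param_of_nonempty (hne.mono hsub)).symm]
  exact hΩ _ h E' hsub hE'

section Semigroup

variable {Γ : Set Move} (hΓ : IsMoveSemigroup Γ) (hres : RestrictClosed Γ)
include hΓ hres

lemma IsMoveSemigroup.mk'_comp_mem {b₂ b₁ : Bool} {q₂ q₁ : ℝ} {E₂ E₁ E : Set ℝ}
    (h₂ : Move.mk' b₂ q₂ E₂ ∈ Γ) (h₁ : Move.mk' b₁ q₁ E₁ ∈ Γ) (hE : Move.ValidDom E)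
    (hsub : E ⊆ E₁) (hmaps : MapsTo (uEval b₁ q₁) E E₂) :
    Move.mk' (b₂ != b₁) (compParam b₂ q₂ q₁) E ∈ Γ := by
  have h := hΓ.2.1 _ h₁ _ h₂
  rw [Move.comp_mk'] at h
  exact hres.mk'_mem h hE fun x hx => ⟨hsub hx, hmaps hx⟩

lemma IsMoveSemigroup.mk'_inv_mem {b : Bool} {q : ℝ} {E E' : Set ℝ}
    (h : Move.mk' b q E ∈ Γ) (hE' : Move.ValidDom E') (hsub : E' ⊆ uEval b q '' E) :
    Move.mk' b (invParam b q) E' ∈ Γ := by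
  have h' := hΓ.2.2 _ h
  rw [Move.inv_mk'_s12] at h'
  exact hres.mk'_mem h' hE' hsub

end Semigroup

lemma subset_limCl (Ω : Set Move) : Ω ⊆ limCl Ω :=
  fun _ hm => mem_sInter.mpr fun _ hΓ => hΓ.2 hm

lemma limClosed_limCl (Ω : Set Move) : LimClosed (limCl Ω) :=
  fun D hD γ b p hc hm => mem_sInter.mpr fun Γ hΓ =>
    hΓ.1 D hD γ b p hc fun i => mem_sInter.mp (hm i) Γ hΓ

lemma subset_joinCl (Ω : Set Move) : Ω ⊆ joinCl Ω :=
  fun _ hm => mem_sInter.mpr fun _ hΓ => hΓ.2 hm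

lemma joinClosed_joinCl (Ω : Set Move) : JoinClosed (joinCl Ω) :=
  ⟨fun m hm D' hsub hD' => mem_sInter.mpr fun Γ hΓ =>
      hΓ.1.1 m (mem_sInter.mp hm Γ hΓ) D' hsub hD',
    fun b p J hJ hmem hord => mem_sInter.mpr fun Γ hΓ =>
      hΓ.1.2 b p J hJ (fun I hI => mem_sInter.mp (hmem I hI) Γ hΓ) hord⟩

lemma mk'_mem_limCl_of_tendsto {Ω : Set Move} {B : Bool} {q : ℕ → ℝ} {Q : ℝ} {N : Set ℝ}
    (hN : Move.ValidDom N) (hq : Tendsto q atTop (𝓝 Q))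
    (hmem : ∀ᶠ n in atTop, Move.mk' B (q n) N ∈ Ω) : Move.mk' B Q N ∈ limCl Ω := by
  obtain ⟨n₀, hn₀⟩ := eventually_atTop.mp hmem
  refine limClosed_limCl Ω N hN (fun n => (B, q (n + n₀))) B Q
    ⟨.of_forall fun _ => rfl, hq.comp (tendsto_add_atTop_nat n₀)⟩ fun n => ?_
  exact subset_limCl Ω (hn₀ _ (Nat.le_add_left _ _))

lemma JoinClosed.mk'_mem_of_local {Ω : Set Move} (hΩ : JoinClosed Ω) {B : Bool} {Q : ℝ}
    {E : Set ℝ} (hE : Move.ValidDom E) (hempty : Move.mk' B Q ∅ ∈ Ω)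
    (hloc : ∀ x ∈ E, ∃ N, Move.ValidDom N ∧ x ∈ N ∧ Move.mk' B Q N ∈ Ω) :
    Move.mk' B Q E ∈ Ω := by
  set J := {N | Move.ValidDom N ∧ N ⊆ E ∧ Move.mk' B Q N ∈ Ω}
  have hJ : ⋃₀ J = E := by
    refine Subset.antisymm (sUnion_subset fun N hN => hN.2.1) fun x hx => ?_
    obtain ⟨N, hN, hxN, hmem⟩ := hloc x hx
    exact ⟨N ∩ E, ⟨hN.inter hE, inter_subset_right,
      hΩ.1.mk'_mem hmem (hN.inter hE) inter_subset_left⟩, hxN, hx⟩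
  rw [← hJ]
  exact hΩ.2 B Q J ⟨∅, Move.validDom_empty, empty_subset E, hempty⟩ (fun N hN => hN.2.2)
    (hJ ▸ hE.2)

lemma JoinClosed.setOf_graph_subset {Ω : Set Move} (hΩ : JoinClosed Ω) {B : Bool}
    {O : Set (ℝ × ℝ)} (hempty : Move.mk' B 0 ∅ ∈ Ω)
    (hloc : ∀ Q x, (x, uEval B Q x) ∈ O → ∃ N, Move.ValidDom N ∧ x ∈ N ∧ Move.mk' B Q N ∈ Ω) :
    {m : Move | m.isRefl = B ∧ m.Valid ∧ m.graph ⊆ O} ⊆ Ω := by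
  rintro m ⟨rfl, hm, hgraph⟩
  rw [← hm.mk'_eq]
  refine hΩ.mk'_mem_of_local hm.1 (Move.mk'_empty _ _ ▸ hempty) fun x hx => hloc _ x ?_
  exact hgraph ⟨x, hx, rfl⟩

lemma ConvergesTo.exists_tendsto {γ : ℕ → Bool × ℝ} {b : Bool} {p : ℝ}
    (hγ : ConvergesTo γ b p) {P : Bool × ℝ → Prop} (hP : ∀ i, P (γ i)) :
    ∃ t : ℕ → ℝ, Tendsto t atTop (𝓝 p) ∧ ∀ n, P (b, t n) := by
  obtain ⟨n₀, hn₀⟩ := eventually_atTop.mp hγ.1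
  refine ⟨fun n => (γ (n + n₀)).2, hγ.2.comp (tendsto_add_atTop_nat n₀), fun n => ?_⟩
  rw [← hn₀ (n + n₀) (Nat.le_add_left _ _)]
  exact hP _

lemma exists_nat_mul_le_lt_add {ε σ : ℝ} (hε : 0 < ε) (hσ : 0 ≤ σ) :
    ∃ k : ℕ, (k : ℝ) * ε ≤ σ ∧ σ < k * ε + ε := by
  refine ⟨⌊σ / ε⌋₊, (le_div_iff₀ hε).mp (Nat.floor_le (div_nonneg hσ hε.le)), ?_⟩
  have := (div_lt_iff₀ hε).mp (Nat.lt_floor_add_one (σ / ε))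
  linarith

lemma mem_closure_inter_uIcc {S : Set ℝ} (hmul : ∀ s ∈ S, ∀ k : ℕ, (k : ℝ) * s ∈ S)
    (hsmall : ∀ δ > 0, ∃ ε, 0 < ε ∧ ε < δ ∧ ε ∈ S ∧ -ε ∈ S) (σ : ℝ) :
    σ ∈ closure (S ∩ uIcc 0 σ) := by
  refine Metric.mem_closure_iff.mpr fun δ hδ => ?_
  obtain ⟨ε, hε, hεδ, hεS, hnegεS⟩ := hsmall δ hδ
  simp only [Real.dist_eq]
  rcases le_total 0 σ with hσ | hσ
  · obtain ⟨k, hk, hkσ⟩ := exists_nat_mul_le_lt_add hε hσ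
    refine ⟨k * ε, ⟨hmul ε hεS k, mem_uIcc.mpr (.inl ⟨by positivity, hk⟩)⟩, ?_⟩
    rw [abs_lt]; constructor <;> linarith
  · obtain ⟨k, hk, hkσ⟩ := exists_nat_mul_le_lt_add hε (neg_nonneg.mpr hσ)
    refine ⟨k * -ε, ⟨hmul _ hnegεS k, mem_uIcc.mpr (.inr ⟨by linarith, ?_⟩)⟩, ?_⟩
    · nlinarith [(Nat.cast_nonneg k : (0 : ℝ) ≤ k)]
    · rw [abs_lt]; constructor <;> linarith

lemma exists_abs_sub_pos_lt {t : ℕ → ℝ} {p : ℝ} (ht : Tendsto t atTop (𝓝 p))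
    (hne : ∀ n, t n ≠ p) {δ : ℝ} (hδ : 0 < δ) : ∃ i j, 0 < |t i - t j| ∧ |t i - t j| < δ := by
  obtain ⟨i, hi⟩ := Metric.tendsto_atTop.mp ht (δ / 2) (half_pos hδ)
  have hti := hi i le_rfl
  obtain ⟨j, hj⟩ := Metric.tendsto_atTop.mp ht _ (dist_pos.mpr (hne i))
  have htj := hj j le_rfl
  refine ⟨i, j, abs_pos.mpr (sub_ne_zero.mpr fun h => (h ▸ htj).false), ?_⟩
  calc |t i - t j| = dist (t i) (t j) := (Real.dist_eq _ _).symm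
    _ ≤ dist (t i) p + dist (t j) p := dist_triangle_right _ _ _
    _ < δ / 2 + δ / 2 := add_lt_add hti (htj.trans hti)
    _ = δ := add_halves δ

def transDom (D : Set ℝ) (σ : ℝ) : Set ℝ := D ∩ (· + σ) ⁻¹' D

lemma Move.ValidDom.transDom {D : Set ℝ} (hD : Move.ValidDom D) (σ : ℝ) :
    Move.ValidDom (transDom D σ) :=
  hD.inter ⟨hD.1.preimage (continuous_add_const σ),
    hD.2.preimage_mono fun _ _ h => add_le_add_left h σ⟩

lemma transDom_subset_transDom {D : Set ℝ} (hD : D.OrdConnected) {s σ : ℝ}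
    (h : s ∈ uIcc 0 σ) : transDom D σ ⊆ transDom D s := by
  rintro x ⟨hx, hxσ⟩
  refine ⟨hx, hD.uIcc_subset hx hxσ ?_⟩
  rcases mem_uIcc.mp h with h | h
  · exact mem_uIcc.mpr (.inl ⟨by linarith, by linarith⟩)
  · exact mem_uIcc.mpr (.inr ⟨by linarith, by linarith⟩)

lemma uEval_add_compParam_invParam (b : Bool) (q q' x : ℝ) :
    uEval b q (x + compParam b (invParam b q) q') = uEval b q' x := by
  cases b <;> simp [uEval, compParam, invParam] <;> ring

lemma compParam_invParam_self (b : Bool) (q : ℝ) : compParam b (invParam b q) q = 0 := by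
  cases b <;> simp [compParam, invParam]

lemma compParam_invParam_comm (b : Bool) (q q' : ℝ) :
    compParam b (invParam b q') q = -compParam b (invParam b q) q' := by
  cases b <;> simp [compParam, invParam]

lemma abs_compParam_invParam (b : Bool) (q q' : ℝ) :
    |compParam b (invParam b q) q'| = |q - q'| := by
  cases b
  · rw [compParam, invParam, ← sub_eq_add_neg, abs_sub_comm]
  · rfl

section Translations

variable {Γ : Set Move} (hΓ : IsMoveSemigroup Γ) (hres : RestrictClosed Γ)
  {D : Set ℝ} (hD : Move.ValidDom D)
include hΓ hres hD

lemma IsMoveSemigroup.mk'_transDom_mem {b : Bool} {q q' : ℝ}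
    (h : Move.mk' b q D ∈ Γ) (h' : Move.mk' b q' D ∈ Γ) :
    Move.mk' false (compParam b (invParam b q) q')
      (transDom D (compParam b (invParam b q) q')) ∈ Γ := by
  have hinv := hΓ.2.2 _ h
  rw [Move.inv_mk'_s12] at hinv
  simpa using hΓ.mk'_comp_mem hres hinv h' (hD.transDom _) inter_subset_left
    fun x hx => ⟨_, hx.2, uEval_add_compParam_invParam b q q' x⟩

lemma IsMoveSemigroup.mk'_transDom_add_mem {s s' : ℝ}
    (h : Move.mk' false s (transDom D s) ∈ Γ) (h' : Move.mk' false s' (transDom D s') ∈ Γ)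
    (hs : s ∈ uIcc 0 (s + s')) : Move.mk' false (s + s') (transDom D (s + s')) ∈ Γ := by
  have hsub := transDom_subset_transDom hD.2 hs
  simpa [compParam, add_comm s'] using hΓ.mk'_comp_mem hres h' h (hD.transDom _) hsub
    fun x hx => ⟨(hsub hx).2, by simpa [uEval, add_assoc] using hx.2⟩

lemma IsMoveSemigroup.mk'_transDom_nat_mul_mem {s : ℝ}
    (h₀ : Move.mk' false 0 (transDom D 0) ∈ Γ) (h : Move.mk' false s (transDom D s) ∈ Γ) :
    ∀ k : ℕ, Move.mk' false (k * s) (transDom D (k * s)) ∈ Γ := by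
  intro k
  induction k with
  | zero => simpa using h₀
  | succ k ih =>
    have hk : (k : ℝ) * s ∈ uIcc 0 (k * s + s) := by
      rcases le_total 0 s with hs | hs
      · exact mem_uIcc.mpr (.inl ⟨by positivity, by linarith⟩)
      · exact mem_uIcc.mpr (.inr ⟨by linarith, mul_nonpos_of_nonneg_of_nonpos k.cast_nonneg hs⟩)
    simpa [add_mul] using hΓ.mk'_transDom_add_mem hres hD ih h hk

end Translations

/-- On some neighbourhood of `x`, the move `(B, Q)` is a fixed-domain limit of moves of `Γ`. -/
def IsLocalLimit (Γ : Set Move) (B : Bool) (Q x : ℝ) : Prop :=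
  ∃ N, Move.ValidDom N ∧ x ∈ N ∧ ∃ q : ℕ → ℝ, Tendsto q atTop (𝓝 Q) ∧
    ∀ᶠ n in atTop, Move.mk' B (q n) N ∈ Γ

lemma IsLocalLimit.exists_mem_limCl {Γ : Set Move} {B : Bool} {Q x : ℝ}
    (h : IsLocalLimit Γ B Q x) : ∃ N, Move.ValidDom N ∧ x ∈ N ∧ Move.mk' B Q N ∈ limCl Γ :=
  let ⟨N, hN, hx, _, hq, hmem⟩ := h
  ⟨N, hN, hx, mk'_mem_limCl_of_tendsto hN hq hmem⟩

lemma eventually_mapsTo_uEval {B : Bool} {q : ℕ → ℝ} {Q x : ℝ} (hq : Tendsto q atTop (𝓝 Q))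
    {U : Set ℝ} (hU : IsOpen U) (hx : uEval B Q x ∈ U) :
    ∃ η > 0, ∀ᶠ n in atTop, MapsTo (uEval B (q n)) (Metric.ball x η) U := by
  obtain ⟨ε, hε, hball⟩ := Metric.isOpen_iff.mp hU _ hx
  refine ⟨ε / 2, half_pos hε, ?_⟩
  filter_upwards [Metric.tendsto_nhds.mp hq (ε / 2) (half_pos hε)] with n hn z hz
  refine hball (lt_of_le_of_lt (dist_uEval_le B _ _ _ _) ?_)
  linarith [Metric.mem_ball.mp hz]

section LocalLimit

variable {Γ : Set Move} (hΓ : IsMoveSemigroup Γ) (hres : RestrictClosed Γ)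
include hΓ hres

lemma IsLocalLimit.comp {B₂ B₁ : Bool} {Q₂ Q₁ x y : ℝ}
    (h₂ : IsLocalLimit Γ B₂ Q₂ y) (h₁ : IsLocalLimit Γ B₁ Q₁ x) (hy : uEval B₁ Q₁ x = y) :
    IsLocalLimit Γ (B₂ != B₁) (compParam B₂ Q₂ Q₁) x := by
  subst hy
  obtain ⟨N₂, hN₂, hx₂, q₂, hq₂, hmem₂⟩ := h₂
  obtain ⟨N₁, hN₁, hx₁, q₁, hq₁, hmem₁⟩ := h₁
  obtain ⟨η, hη, hmaps⟩ := eventually_mapsTo_uEval hq₁ hN₂.1 hx₂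
  have hN := (Move.validDom_ball x η).inter hN₁
  refine ⟨_, hN, ⟨Metric.mem_ball_self hη, hx₁⟩, _, hq₂.compParam B₂ hq₁, ?_⟩
  filter_upwards [hmem₂, hmem₁, hmaps] with n h₂ h₁ hmaps
  exact hΓ.mk'_comp_mem hres h₂ h₁ hN inter_subset_right (hmaps.mono_left inter_subset_left)

lemma IsLocalLimit.inv {B : Bool} {Q x : ℝ} (h : IsLocalLimit Γ B Q x) :
    IsLocalLimit Γ B (invParam B Q) (uEval B Q x) := by
  obtain ⟨N, hN, hx, q, hq, hmem⟩ := h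
  have hq' := hq.invParam B
  obtain ⟨η, hη, hmaps⟩ := eventually_mapsTo_uEval hq' hN.1
    ((uEval_invParam_uEval B Q x).symm ▸ hx)
  refine ⟨_, Move.validDom_ball _ η, Metric.mem_ball_self hη, _, hq', ?_⟩
  filter_upwards [hmem, hmaps] with n hmem hmaps
  exact hΓ.mk'_inv_mem hres hmem (Move.validDom_ball _ η)
    fun z hz => ⟨_, hmaps hz, uEval_uEval_invParam B (q n) z⟩

end LocalLimit

lemma IsMoveSemigroup.mk'_empty_mem {Γ : Set Move} (hΓ : IsMoveSemigroup Γ)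
    (hres : RestrictClosed Γ) {b : Bool} {q : ℝ} {E : Set ℝ} (h : Move.mk' b q E ∈ Γ) :
    Move.mk' b 0 ∅ ∈ Γ ∧ Move.mk' false 0 ∅ ∈ Γ := by
  have h0 := hres.mk'_mem h Move.validDom_empty (empty_subset E)
  rw [Move.mk'_empty] at h0
  refine ⟨h0, ?_⟩
  simpa [Move.mk'_empty] using
    hΓ.mk'_comp_mem hres h0 h0 Move.validDom_empty subset_rfl (mapsTo_empty _ _)

lemma isLocalLimit_of_mem_transDom {Γ : Set Move} (hΓ : IsMoveSemigroup Γ)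
    (hres : RestrictClosed Γ) {D : Set ℝ} (hD : Move.ValidDom D) {b : Bool} {p : ℝ}
    {t : ℕ → ℝ} (ht : Tendsto t atTop (𝓝 p)) (hne : ∀ n, t n ≠ p)
    (hmem : ∀ n, Move.mk' b (t n) D ∈ Γ) (σ : ℝ) :
    ∀ x ∈ transDom D σ, IsLocalLimit Γ false σ x := by
  set S := {s | Move.mk' false s (transDom D s) ∈ Γ}
  -- `γ_i⁻¹ ∘ γ_j`, a translation by `±(t j - t i)`
  have hdiff i j : compParam b (invParam b (t i)) (t j) ∈ S :=
    hΓ.mk'_transDom_mem hres hD (hmem i) (hmem j)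
  have hmul : ∀ s ∈ S, ∀ k : ℕ, (k : ℝ) * s ∈ S := fun s hs =>
    hΓ.mk'_transDom_nat_mul_mem hres hD (compParam_invParam_self b (t 0) ▸ hdiff 0 0) hs
  have hsmall : ∀ δ > 0, ∃ ε, 0 < ε ∧ ε < δ ∧ ε ∈ S ∧ -ε ∈ S := by
    intro δ hδ
    obtain ⟨i, j, hpos, hlt⟩ := exists_abs_sub_pos_lt ht hne hδ
    rw [← abs_compParam_invParam b] at hpos hlt
    have hneg := compParam_invParam_comm b (t i) (t j) ▸ hdiff j i
    refine ⟨_, hpos, hlt, ?_⟩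
    rcases abs_choice (compParam b (invParam b (t i)) (t j)) with h | h <;> rw [h]
    · exact ⟨hdiff i j, hneg⟩
    · exact ⟨hneg, by simpa using hdiff i j⟩
  obtain ⟨s, hsS, hs⟩ := mem_closure_iff_seq_limit.mp (mem_closure_inter_uIcc hmul hsmall σ)
  exact fun x hx => ⟨_, hD.transDom σ, hx, s, hs, .of_forall fun n =>
    hres.mk'_mem (hsS n).1 (hD.transDom σ) (transDom_subset_transDom hD.2 (hsS n).2)⟩

section Components

variable {Γ : Set Move} (hΓ : IsMoveSemigroup Γ) (hres : RestrictClosed Γ) {D : Set ℝ}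
  {b : Bool} {p : ℝ} (hγ : ∀ x ∈ D, IsLocalLimit Γ b p x)
  (hτ : ∀ σ, ∀ x ∈ transDom D σ, IsLocalLimit Γ false σ x)
include hΓ hres hγ hτ

lemma isLocalLimit_translation_of_translation_limit (hb : b = false) {Q x : ℝ}
    (h : (x, uEval false Q x) ∈ (D ∪ uEval b p '' D) ×ˢ (D ∪ uEval b p '' D)) :
    IsLocalLimit Γ false Q x := by
  subst hb
  obtain ⟨hx | ⟨d, hd, rfl⟩, hy | ⟨e, he, hy⟩⟩ := h
  · exact hτ Q x ⟨hx, hy⟩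
  · have he' : x + (Q - p) = e := by simp [uEval] at hy; linarith
    have hσ : x ∈ transDom D (Q - p) := ⟨hx, show x + (Q - p) ∈ D from he' ▸ he⟩
    simpa [compParam] using (hγ e he).comp hΓ hres (hτ _ x hσ) (by simpa [uEval] using he')
  · have hσ : d ∈ transDom D (Q + p) := ⟨hd, by simpa [uEval, add_assoc, add_comm p] using hy⟩
    simpa [compParam, invParam] using
      (hτ _ d hσ).comp hΓ hres ((hγ d hd).inv hΓ hres) (by simp [uEval, invParam])
  · have he' : d + Q = e := by simp [uEval] at hy; linarith
    have hσ : d ∈ transDom D Q := ⟨hd, show d + Q ∈ D from he' ▸ he⟩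
    have hτγ := (hγ e he).comp hΓ hres (hτ Q d hσ) (by simpa [uEval] using he')
    simpa [compParam, invParam] using
      hτγ.comp hΓ hres ((hγ d hd).inv hΓ hres) (by simp [uEval, invParam])

lemma isLocalLimit_reflection_of_reflection_limit (hb : b = true) {Q x : ℝ}
    (h : (x, uEval true Q x) ∈ D ×ˢ (uEval b p '' D) ∪ (uEval b p '' D) ×ˢ D) :
    IsLocalLimit Γ true Q x := by
  subst hb
  rcases h with ⟨hx, e, he, hy⟩ | ⟨⟨d, hd, rfl⟩, hy⟩
  · have he' : x + (p - Q) = e := by simp [uEval] at hy; linarith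
    have hσ : x ∈ transDom D (p - Q) := ⟨hx, show x + (p - Q) ∈ D from he' ▸ he⟩
    simpa [compParam] using (hγ e he).comp hΓ hres (hτ _ x hσ) (by simpa [uEval] using he')
  · have hσ : d ∈ transDom D (Q - p) := ⟨hd, show d + (Q - p) ∈ D by
      simp only [uEval, if_true] at hy; convert hy using 1; ring⟩
    simpa [compParam, invParam] using
      (hτ _ d hσ).comp hΓ hres ((hγ d hd).inv hΓ hres) (by simp [uEval, invParam])

lemma isLocalLimit_translation_of_reflection_limit (hb : b = true) {Q x : ℝ}
    (h : (x, uEval false Q x) ∈ D ×ˢ D ∪ (uEval b p '' D) ×ˢ (uEval b p '' D)) :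
    IsLocalLimit Γ false Q x := by
  subst hb
  rcases h with ⟨hx, hy⟩ | ⟨⟨d, hd, rfl⟩, e, he, hy⟩
  · exact hτ Q x ⟨hx, hy⟩
  · have he' : d + -Q = e := by simp [uEval] at hy; linarith
    have hσ : d ∈ transDom D (-Q) := ⟨hd, show d + -Q ∈ D from he' ▸ he⟩
    have hτγ := (hγ e he).comp hΓ hres (hτ _ d hσ) (by simpa [uEval] using he')
    simpa [compParam, invParam] using
      hτγ.comp hΓ hres ((hγ d hd).inv hΓ hres) (by simp [uEval, invParam])

end Components

/-- Limits imply components. -/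
theorem limits_imply_components (Γ : Set Move)
    (hsemi : IsMoveSemigroup Γ) (hjoin : JoinClosed Γ)
    (D : Set ℝ) (hD : Move.ValidDom D)
    (γ : ℕ → Bool × ℝ) (b : Bool) (p : ℝ) (hconv : ConvergesTo γ b p)
    (hmem : ∀ i, Move.mk' (γ i).1 (γ i).2 D ∈ Γ)
    (hne : ∀ i, γ i ≠ (b, p))
    (I : Set ℝ) (hI : I = uEval b p '' D) :
    (b = false → tMoves ((D ∪ I) ×ˢ (D ∪ I)) ⊆ joinCl (limCl Γ)) ∧
    (b = true →
      rMoves ((D ×ˢ I) ∪ (I ×ˢ D)) ⊆ joinCl (limCl Γ) ∧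
      tMoves ((D ×ˢ D) ∪ (I ×ˢ I)) ⊆ joinCl (limCl Γ)) := by
  subst hI
  obtain ⟨t, ht, htΓ⟩ := hconv.exists_tendsto
    (P := fun c => Move.mk' c.1 c.2 D ∈ Γ ∧ c ≠ (b, p)) fun i => ⟨hmem i, hne i⟩
  have hγ : ∀ x ∈ D, IsLocalLimit Γ b p x :=
    fun x hx => ⟨D, hD, hx, t, ht, .of_forall fun n => (htΓ n).1⟩
  have hτ := isLocalLimit_of_mem_transDom hsemi hjoin.1 hD ht
    (fun n h => (htΓ n).2 (congrArg _ h)) fun n => (htΓ n).1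
  have hlim {B Q x} (h : IsLocalLimit Γ B Q x) :
      ∃ N, Move.ValidDom N ∧ x ∈ N ∧ Move.mk' B Q N ∈ joinCl (limCl Γ) :=
    let ⟨N, hN, hx, hQ⟩ := h.exists_mem_limCl
    ⟨N, hN, hx, subset_joinCl _ hQ⟩
  have hlift : Γ ⊆ joinCl (limCl Γ) := (subset_limCl Γ).trans (subset_joinCl _)
  obtain ⟨hempty, hempty_false⟩ := hsemi.mk'_empty_mem hjoin.1 (htΓ 0).1
  refine ⟨fun hb => ?_, fun hb => ⟨?_, ?_⟩⟩
  · exact (joinClosed_joinCl _).setOf_graph_subset (hlift hempty_false) fun Q x h =>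
      hlim (isLocalLimit_translation_of_translation_limit hsemi hjoin.1 hγ hτ hb h)
  · exact (joinClosed_joinCl _).setOf_graph_subset (hlift (hb ▸ hempty)) fun Q x h =>
      hlim (isLocalLimit_reflection_of_reflection_limit hsemi hjoin.1 hγ hτ hb h)
  · exact (joinClosed_joinCl _).setOf_graph_subset (hlift hempty_false) fun Q x h =>
      hlim (isLocalLimit_translation_of_reflection_limit hsemi hjoin.1 hγ hτ hb h)
end
end
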